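/- Let d ∈ ℕ, C ≥ 1, and let P be a polynomial of degree d with integer coefficients. Let N ≥ 1, and let f₀, f₁ : ℤ → ℂ be functions supported on [−C N^d, C N^d] with |f₀|, |f₁| ≤ 1, and let θ : {1,...,⌊N⌋} → ℂ. Then |(1/N^{d+1}) ∑_{m∈ℤ} ∑_{n=1}^{⌊N⌋} θ(n) f₀(m) f₁(m + P(n))| ≪_{C,P} ‖θ‖_{u^{d+1}[N]}, where ‖θ‖_{u^{d+1}[N]} = sup_{Q ∈ ℝ[y], deg Q ≤ d} |(1/⌊N⌋) ∑_{n=1}^{⌊N⌋} θ(n) e(−Q(n))|. -/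

import Mathlib

/-! Pick `M > 2B + max |P(n)|`, where `[-B, B] ⊇ [-C N^d, C N^d]`. Then no congruence
`m + P(n) ≡ i (mod M)` with `m, i ∈ [-B, B]` wraps around, so orthogonality of the characters of
`ℤ/Mℤ` turns the counting sum into `M⁻¹ ∑_{k < M} F₀(k) F₁(k) T(k)`, with `F₀, F₁` the Fourier
transforms of `f₀, f₁` and `T(k) = ∑ θ(n) e(k P(n) / M)`. Each `T(k)` is a correlation of `θ`
with the polynomial phase `-(k / M) P`, so `|T(k)| ≤ ⌊N⌋ ‖θ‖_{u^{d+1}[N]}`, while AM–GM and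
Parseval give `∑_k |F₀(k) F₁(k)| ≤ M (2B + 1)`. -/

noncomputable section

/-- `e(x) = e^{2πix}`. -/
def e (x : ℝ) : ℂ := Complex.exp (2 * Real.pi * Complex.I * x)

/-- The `u^{s}[N]` norm: the maximal correlation of `θ` with polynomial phases of
degree at most `s - 1`; here with `s = d + 1` we take degree at most `d`. -/
def usNorm (d : ℕ) (θ : ℤ → ℂ) (N : ℝ) : ℝ :=
  ⨆ Q : {Q : Polynomial ℝ // Q.natDegree ≤ d},
    ‖(⌊N⌋ : ℂ)⁻¹ * ∑ n ∈ Finset.Icc (1:ℤ) ⌊N⌋, θ n * e (-(Q.1.eval (n : ℝ)))‖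

lemma e_add (x y : ℝ) : e (x + y) = e x * e y := by
  simp only [e, ← Complex.exp_add]; push_cast; ring_nf

lemma e_neg (x : ℝ) : e (-x) = (starRingEnd ℂ) (e x) := by
  simp only [e, ← Complex.exp_conj, map_mul, Complex.conj_I, Complex.conj_ofReal, map_ofNat]
  push_cast; ring_nf

lemma e_nat_mul (k : ℕ) (x : ℝ) : e (k * x) = e x ^ k := by
  simp only [e, ← Complex.exp_nat_mul]; push_cast; ring_nf

lemma norm_e (x : ℝ) : ‖e x‖ = 1 := by
  rw [e, Complex.norm_exp]; simp

lemma e_eq_one_iff (x : ℝ) : e x = 1 ↔ ∃ n : ℤ, x = n := by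
  have h2πi : 2 * (Real.pi : ℂ) * Complex.I ≠ 0 := by simp [Real.pi_ne_zero]
  simp only [e, Complex.exp_eq_one_iff]
  refine exists_congr fun n => ⟨fun h => ?_, fun h => by rw [h]; push_cast; ring⟩
  exact_mod_cast mul_left_cancel₀ h2πi (h.trans (mul_comm _ _))

lemma sum_range_e_div_mul (M : ℕ) (t : ℤ) :
    ∑ k ∈ Finset.range M, e (k / M * t) = if (M : ℤ) ∣ t then (M : ℂ) else 0 := by
  rcases Nat.eq_zero_or_pos M with rfl | hM
  · simp
  have hM' : (M : ℝ) ≠ 0 := by positivity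
  have hterm : ∀ k : ℕ, e (k / M * t) = e (t / M) ^ k := fun k => by
    rw [← e_nat_mul]; ring_nf
  simp_rw [hterm]
  split_ifs with hdvd
  · obtain ⟨c, rfl⟩ := hdvd
    have h1 : e (((M * c : ℤ) : ℝ) / M) = 1 := (e_eq_one_iff _).2 ⟨c, by push_cast; field_simp⟩
    simp only [h1, one_pow, Finset.sum_const, Finset.card_range, nsmul_eq_mul, mul_one]
  · have hne : e (t / M) ≠ 1 := by
      rw [ne_eq, e_eq_one_iff]
      rintro ⟨c, hc⟩
      exact hdvd ⟨c, by exact_mod_cast (div_eq_iff hM').1 hc |>.trans (mul_comm _ _)⟩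
    have hpow : e (t / M) ^ M = 1 := by
      rw [← e_nat_mul, e_eq_one_iff]; exact ⟨t, by field_simp⟩
    rw [geom_sum_eq hne, hpow, sub_self, zero_div]

def expSum {ι : Type*} (s : Finset ι) (a : ι → ℂ) (x : ι → ℤ) (α : ℝ) : ℂ :=
  ∑ n ∈ s, a n * e (α * x n)

section expSum

variable {ι κ : Type*}

lemma expSum_mul_expSum (s : Finset ι) (t : Finset κ) (a : ι → ℂ) (b : κ → ℂ)
    (x : ι → ℤ) (y : κ → ℤ) (α : ℝ) :
    expSum s a x α * expSum t b y α =
      expSum (s ×ˢ t) (fun p => a p.1 * b p.2) (fun p => x p.1 + y p.2) α := by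
  simp only [expSum, Finset.sum_mul_sum, Finset.sum_product]
  refine Finset.sum_congr rfl fun m _ => Finset.sum_congr rfl fun n _ => ?_
  push_cast
  rw [mul_add, e_add]; ring

lemma conj_expSum (s : Finset ι) (a : ι → ℂ) (x : ι → ℤ) (α : ℝ) :
    (starRingEnd ℂ) (expSum s a x α) = expSum s (fun n => (starRingEnd ℂ) (a n)) (-x) α := by
  simp only [expSum, map_sum, map_mul, ← e_neg, Pi.neg_apply, Int.cast_neg, mul_neg]

lemma sum_range_expSum (M : ℕ) (s : Finset ι) (a : ι → ℂ) (x : ι → ℤ) :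
    ∑ k ∈ Finset.range M, expSum s a x (k / M) =
      M * ∑ n ∈ s, if (M : ℤ) ∣ x n then a n else 0 := by
  simp only [expSum]
  rw [Finset.sum_comm, Finset.mul_sum]
  refine Finset.sum_congr rfl fun n _ => ?_
  rw [← Finset.mul_sum, sum_range_e_div_mul]
  split_ifs <;> ring

lemma sum_range_norm_expSum_sq (M : ℕ) (s : Finset ι) (a : ι → ℂ) (x : ι → ℤ)
    (hx : ∀ m ∈ s, ∀ n ∈ s, (M : ℤ) ∣ x m - x n → m = n) :
    ∑ k ∈ Finset.range M, ‖expSum s a x (k / M)‖ ^ 2 = M * ∑ n ∈ s, ‖a n‖ ^ 2 := by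
  classical
  refine Complex.ofReal_injective ?_
  push_cast
  simp only [← Complex.mul_conj', conj_expSum, expSum_mul_expSum, sum_range_expSum,
    Finset.sum_product, Pi.neg_apply, ← sub_eq_add_neg]
  congr 1
  refine Finset.sum_congr rfl fun m hm => ?_
  have hiff : ∀ n ∈ s, (M : ℤ) ∣ x m - x n ↔ m = n := fun n hn =>
    ⟨hx m hm n hn, fun h => h ▸ by simp⟩
  rw [Finset.sum_congr rfl fun n hn => if_congr (hiff n hn) rfl rfl, Finset.sum_ite_eq,
    if_pos hm]

end expSum

section counting

variable {ι : Type*}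

lemma natCast_mul_sum_sum_eq_sum_range_expSum (M : ℕ) (W : Finset ℤ) (I : Finset ι) (p : ι → ℤ)
    (θ : ι → ℂ) (f₀ f₁ : ℤ → ℂ) (hf₁ : ∀ i ∉ W, f₁ i = 0)
    (hM : ∀ m ∈ W, ∀ n ∈ I, ∀ i ∈ W, (M : ℤ) ∣ m + -i + p n → m + p n = i) :
    M * ∑ m ∈ W, ∑ n ∈ I, θ n * f₀ m * f₁ (m + p n) =
      ∑ k ∈ Finset.range M,
        expSum W f₀ id (k / M) * expSum W f₁ (-id) (k / M) * expSum I θ p (k / M) := by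
  classical
  simp only [expSum_mul_expSum, sum_range_expSum, Finset.sum_product, id, Pi.neg_apply]
  congr 1
  refine Finset.sum_congr rfl fun m hm => ?_
  rw [Finset.sum_comm]
  refine Finset.sum_congr rfl fun n hn => ?_
  have hiff : ∀ i ∈ W, (M : ℤ) ∣ m + -i + p n ↔ m + p n = i := fun i hi =>
    ⟨hM m hm n hn i hi, fun h => by rw [← h]; simp⟩
  rw [Finset.sum_congr rfl fun i hi => if_congr (hiff i hi) rfl rfl, Finset.sum_ite_eq]
  split_ifs with hmem
  · ring
  · rw [hf₁ _ hmem, mul_zero]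

lemma sum_range_norm_expSum_Icc_sq_le {M B : ℕ} (hBM : 2 * B < M) (f : ℤ → ℂ)
    (hf : ∀ m, ‖f m‖ ≤ 1) (x : ℤ → ℤ) (hx : ∀ m n, |x m - x n| = |m - n|) :
    ∑ k ∈ Finset.range M, ‖expSum (Finset.Icc (-B : ℤ) B) f x (k / M)‖ ^ 2 ≤
      M * (2 * B + 1) := by
  rw [sum_range_norm_expSum_sq]
  · gcongr
    calc ∑ m ∈ Finset.Icc (-B : ℤ) B, ‖f m‖ ^ 2
        ≤ ∑ m ∈ Finset.Icc (-B : ℤ) B, (1 : ℝ) :=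
          Finset.sum_le_sum fun m _ => pow_le_one₀ (norm_nonneg _) (hf m)
      _ = 2 * B + 1 := by
          rw [Finset.sum_const, Int.card_Icc, nsmul_one]
          norm_cast; omega
  · intro m hm n hn hdvd
    rw [Finset.mem_Icc] at hm hn
    have hlt : |x m - x n| < M := by rw [hx, abs_lt]; omega
    have h0 : |m - n| = 0 := by rw [← hx, Int.eq_zero_of_abs_lt_dvd hdvd hlt, abs_zero]
    exact sub_eq_zero.1 (abs_eq_zero.1 h0)

theorem norm_sum_sum_le_of_norm_expSum_le (I : Finset ι) (p : ι → ℤ) (θ : ι → ℂ) (B : ℕ)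
    (f₀ f₁ : ℤ → ℂ) (hf₀ : ∀ m, ‖f₀ m‖ ≤ 1) (hf₁ : ∀ m, ‖f₁ m‖ ≤ 1)
    (hsupp : ∀ m ∉ Finset.Icc (-B : ℤ) B, f₁ m = 0) (U : ℝ) (hU : ∀ α, ‖expSum I θ p α‖ ≤ U) :
    ‖∑ m ∈ Finset.Icc (-B : ℤ) B, ∑ n ∈ I, θ n * f₀ m * f₁ (m + p n)‖ ≤ (2 * B + 1) * U := by
  set W := Finset.Icc (-B : ℤ) B
  set A := ∑ n ∈ I, |p n|
  have hA : ∀ n ∈ I, |p n| ≤ A := fun n hn =>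
    Finset.single_le_sum (f := fun n => |p n|) (fun _ _ => abs_nonneg _) hn
  have hA0 : 0 ≤ A := Finset.sum_nonneg fun _ _ => abs_nonneg _
  set M := (2 * B + 1 + A).toNat
  have hMA : (M : ℤ) = 2 * B + 1 + A := Int.toNat_of_nonneg (by omega)
  have hBM : 2 * B < M := by omega
  have hMpos : (0 : ℝ) < M := by exact_mod_cast (show 0 < M by omega)
  set F₀ := fun k : ℕ => expSum W f₀ id (k / M)
  set F₁ := fun k : ℕ => expSum W f₁ (-id) (k / M)
  have hidentity := natCast_mul_sum_sum_eq_sum_range_expSum M W I p θ f₀ f₁ hsupp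
    fun m hm n hn i hi hdvd => by
      rw [Finset.mem_Icc] at hm hi
      have hlt : |m + -i + p n| < M := by
        have := hA n hn
        rw [abs_lt]; constructor <;> cases abs_cases (p n) <;> omega
      linarith [Int.eq_zero_of_abs_lt_dvd hdvd hlt]
  have hParseval₀ : ∑ k ∈ Finset.range M, ‖F₀ k‖ ^ 2 ≤ M * (2 * B + 1) :=
    sum_range_norm_expSum_Icc_sq_le hBM f₀ hf₀ id fun _ _ => rfl
  have hParseval₁ : ∑ k ∈ Finset.range M, ‖F₁ k‖ ^ 2 ≤ M * (2 * B + 1) :=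
    sum_range_norm_expSum_Icc_sq_le hBM f₁ hf₁ (-id) fun m n => by
      simp only [Pi.neg_apply, id, ← abs_neg (-m - -n)]; ring_nf
  have hAMGM : ∑ k ∈ Finset.range M, ‖F₀ k‖ * ‖F₁ k‖ ≤ M * (2 * B + 1) := by
    have := Finset.sum_le_sum fun k (_ : k ∈ Finset.range M) => two_mul_le_add_sq ‖F₀ k‖ ‖F₁ k‖
    rw [Finset.sum_add_distrib] at this
    simp only [mul_assoc, ← Finset.mul_sum] at this
    linarith
  have hU0 : 0 ≤ U := (norm_nonneg _).trans (hU 0)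
  refine le_of_mul_le_mul_left ?_ hMpos
  calc (M : ℝ) * ‖∑ m ∈ W, ∑ n ∈ I, θ n * f₀ m * f₁ (m + p n)‖
      = ‖∑ k ∈ Finset.range M, F₀ k * F₁ k * expSum I θ p (k / M)‖ := by
        rw [← hidentity, norm_mul, Complex.norm_natCast]
    _ ≤ ∑ k ∈ Finset.range M, ‖F₀ k‖ * ‖F₁ k‖ * U := by
        refine (norm_sum_le _ _).trans (Finset.sum_le_sum fun k _ => ?_)
        rw [norm_mul, norm_mul]
        exact mul_le_mul_of_nonneg_left (hU _) (by positivity)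
    _ ≤ M * (2 * B + 1) * U := by
        rw [← Finset.sum_mul]; exact mul_le_mul_of_nonneg_right hAMGM hU0
    _ = M * ((2 * B + 1) * U) := by ring

end counting

lemma norm_expSum_le_floor_mul_usNorm {d : ℕ} {P : Polynomial ℤ} (hP : P.natDegree ≤ d)
    (θ : ℤ → ℂ) {N : ℝ} (hN : 1 ≤ N) (α : ℝ) :
    ‖expSum (Finset.Icc 1 ⌊N⌋) θ (fun n => P.eval n) α‖ ≤ ⌊N⌋ * usNorm d θ N := by
  have hL : (0 : ℝ) < ⌊N⌋ := by exact_mod_cast Int.floor_pos.2 hN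
  set Q : Polynomial ℝ := Polynomial.C (-α) * P.map (Int.castRingHom ℝ)
  have hQ : Q.natDegree ≤ d :=
    (Polynomial.natDegree_C_mul_le _ _).trans (Polynomial.natDegree_map_le.trans hP)
  have hbdd : BddAbove (Set.range fun Q : {Q : Polynomial ℝ // Q.natDegree ≤ d} =>
      ‖(⌊N⌋ : ℂ)⁻¹ * ∑ n ∈ Finset.Icc (1:ℤ) ⌊N⌋, θ n * e (-(Q.1.eval (n : ℝ)))‖) := by
    refine ⟨‖(⌊N⌋ : ℂ)⁻¹‖ * ∑ n ∈ Finset.Icc (1:ℤ) ⌊N⌋, ‖θ n‖, ?_⟩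
    rintro _ ⟨R, rfl⟩
    dsimp only
    rw [norm_mul]
    gcongr
    refine (norm_sum_le _ _).trans (Finset.sum_le_sum fun n _ => ?_)
    rw [norm_mul, norm_e, mul_one]
  have hQeval : ∑ n ∈ Finset.Icc (1:ℤ) ⌊N⌋, θ n * e (-(Q.eval (n : ℝ))) =
      expSum (Finset.Icc 1 ⌊N⌋) θ (fun n => P.eval n) α := by
    refine Finset.sum_congr rfl fun n _ => ?_
    simp [Q, Polynomial.eval_intCast_map]
  have hle := le_ciSup hbdd ⟨Q, hQ⟩
  rw [hQeval, norm_mul, norm_inv, Complex.norm_intCast, abs_of_pos hL, inv_mul_le_iff₀ hL] at hle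
  exact hle

/-- The two-term weighted generalised von Neumann theorem via the circle method. -/
theorem circle_method_gvnt (d : ℕ) (C : ℝ) (hC : 1 ≤ C) (P : Polynomial ℤ)
    (hP : P.natDegree = d) :
    ∃ K : ℝ, 0 < K ∧ ∀ N : ℝ, 1 ≤ N → ∀ f₀ f₁ θ : ℤ → ℂ,
    (∀ m : ℤ, C * N ^ d < |(m : ℝ)| → f₀ m = 0) →
    (∀ m : ℤ, C * N ^ d < |(m : ℝ)| → f₁ m = 0) →
    (∀ m, ‖f₀ m‖ ≤ 1) → (∀ m, ‖f₁ m‖ ≤ 1) →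
    ‖((N : ℂ) ^ (d + 1))⁻¹ *
        ∑' m : ℤ, ∑ n ∈ Finset.Icc (1:ℤ) ⌊N⌋, θ n * f₀ m * f₁ (m + P.eval n)‖ ≤
      K * usNorm d θ N := by
  refine ⟨5 * C, by linarith, fun N hN f₀ f₁ θ hsupp₀ hsupp₁ hf₀ hf₁ => ?_⟩
  have hCN : 1 ≤ C * N ^ d := one_le_mul_of_one_le_of_one_le hC (one_le_pow₀ hN)
  set B := ⌈C * N ^ d⌉₊
  have hB : (B : ℝ) < C * N ^ d + 1 := Nat.ceil_lt_add_one (by linarith)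
  have hsupp : ∀ f : ℤ → ℂ, (∀ m : ℤ, C * N ^ d < |(m : ℝ)| → f m = 0) →
      ∀ m ∉ Finset.Icc (-B : ℤ) B, f m = 0 := fun f hf m hm => hf m <| by
    have : (B : ℤ) < |m| := by rw [Finset.mem_Icc] at hm; rw [lt_abs]; omega
    calc C * N ^ d ≤ B := Nat.le_ceil _
      _ < |(m : ℝ)| := by exact_mod_cast this
  have hfinite : ∑' m : ℤ, ∑ n ∈ Finset.Icc (1:ℤ) ⌊N⌋, θ n * f₀ m * f₁ (m + P.eval n) =
      ∑ m ∈ Finset.Icc (-B : ℤ) B, ∑ n ∈ Finset.Icc (1:ℤ) ⌊N⌋, θ n * f₀ m * f₁ (m + P.eval n) :=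
    tsum_eq_sum fun m hm => by simp [hsupp f₀ hsupp₀ m hm]
  have hcount := norm_sum_sum_le_of_norm_expSum_le _ _ θ B f₀ f₁ hf₀ hf₁ (hsupp f₁ hsupp₁) _
    (norm_expSum_le_floor_mul_usNorm hP.le θ hN)
  have hu : 0 ≤ usNorm d θ N := Real.iSup_nonneg fun _ => norm_nonneg _
  have hNpos : 0 < N := by linarith
  rw [hfinite, norm_mul, norm_inv, norm_pow, Complex.norm_real, Real.norm_of_nonneg hNpos.le,
    inv_mul_le_iff₀ (by positivity)]
  calc _ ≤ (2 * B + 1) * (⌊N⌋ * usNorm d θ N) := hcount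
    _ ≤ (5 * C * N ^ d) * (N * usNorm d θ N) := by
        gcongr
        · linarith
        · exact Int.floor_le N
    _ = N ^ (d + 1) * (5 * C * usNorm d θ N) := by ring
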